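/- Let ζ₀ belong to the Sobolev-type space H^{1/2}, i.e., ∑_{k≥0}(1+k)|⟨ζ₀,φ_k⟩|² < ∞, where (φ_k) is the cosine orthonormal basis of L²[0,π]. Then ∑_{k≥1} k² · |√(tanh(√μ k)/(√μ k)) - 1|² · |⟨ζ₀,φ_k⟩|² ≤ μ · ∑_{k≥1} k⁴ |⟨ζ₀,φ_k⟩|² whenever the right side is finite; consequently for ζ₀ in H¹ (meaning ∑ k⁴|⟨ζ₀,φ_k⟩|² < ∞), ‖((1/μ)A_μ)^{1/2}ζ₀ - A₀^{1/2}ζ₀‖²_{L²} ≤ μ‖ζ₀‖²_{H¹}. -/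

import Mathlib

/-!
The claim is a termwise bound on the symbols: with `x = √μ k` it reads `|√(tanh x / x) - 1| ≤ x`.
This follows from the elementary estimate `x / (1 + x) ≤ tanh x ≤ x` for `x ≥ 0`: it puts
`t = tanh x / x` in `[1 - x, 1]`, and then `1 - √t ≤ 1 - t ≤ x`.
-/

open Real

namespace Real

theorem sinh_le_mul_cosh {x : ℝ} (hx : 0 ≤ x) : sinh x ≤ x * cosh x := by
  -- mean value theorem for `sinh` on `[0, x]`, where `sinh' = cosh ≤ cosh x`
  have h := (convex_Icc 0 x).image_sub_le_mul_sub_of_deriv_le continuous_sinh.continuousOn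
    differentiable_sinh.differentiableOn (C := cosh x)
    (fun y hy => by
      rw [interior_Icc] at hy
      rw [deriv_sinh, cosh_le_cosh, abs_of_pos hy.1, abs_of_nonneg hx]
      exact hy.2.le)
    0 (Set.left_mem_Icc.2 hx) x (Set.right_mem_Icc.2 hx) hx
  simpa [mul_comm] using h

theorem tanh_le_self {x : ℝ} (hx : 0 ≤ x) : tanh x ≤ x := by
  rw [tanh_eq_sinh_div_cosh, div_le_iff₀ (cosh_pos x)]
  exact sinh_le_mul_cosh hx

theorem div_one_add_le_tanh {x : ℝ} (hx : 0 ≤ x) : x / (1 + x) ≤ tanh x := by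
  -- after clearing denominators this is `1 + 2x ≤ exp (2x)`
  have hexp : 2 * x + 1 ≤ exp x * exp x := by
    rw [← exp_add, ← two_mul]; exact add_one_le_exp _
  have hinv : exp x * exp (-x) = 1 := by rw [← exp_add, add_neg_cancel, exp_zero]
  rw [tanh_eq, div_le_div_iff₀ (by positivity) (by positivity)]
  nlinarith [exp_pos x, exp_pos (-x)]

theorem abs_sqrt_tanh_div_self_sub_one_le {x : ℝ} (hx : 0 < x) :
    |√(tanh x / x) - 1| ≤ x := by
  set t := tanh x / x
  have ht_le_one : t ≤ 1 := (div_le_one hx).2 (tanh_le_self hx.le)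
  have ht_lower : 1 - x ≤ t := by
    have h := div_one_add_le_tanh hx.le
    rw [le_div_iff₀ hx]
    rw [div_le_iff₀ (by positivity)] at h
    nlinarith [pow_pos hx 3]
  have h_sqrt : t ≤ √t := le_sqrt_self_iff.2 ht_le_one
  rw [abs_sub_comm, abs_of_nonneg (sub_nonneg.2 (sqrt_le_one.2 ht_le_one))]
  linarith

end Real

theorem sq_abs_sqrt_tanh_div_sub_one_le {μ n : ℝ} (hμ : 0 < μ) (hn : 0 < n) :
    |√(tanh (√μ * n) / (√μ * n)) - 1| ^ 2 ≤ μ * n ^ 2 := by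
  calc |√(tanh (√μ * n) / (√μ * n)) - 1| ^ 2 ≤ (√μ * n) ^ 2 :=
        pow_le_pow_left₀ (abs_nonneg _)
          (abs_sqrt_tanh_div_self_sub_one_le (by positivity)) 2
    _ = μ * n ^ 2 := by rw [mul_pow, sq_sqrt hμ.le]

theorem sqrt_op_convergence_general (μ : ℝ) (hμ0 : 0 < μ)
    (c : ℕ → ℝ)
    (hH1 : Summable fun k : ℕ => ((k : ℝ) + 1) ^ 4 * (c (k + 1)) ^ 2) :
    (∑' k : ℕ, ((k : ℝ) + 1) ^ 2
        * |Real.sqrt (Real.tanh (Real.sqrt μ * ((k : ℝ) + 1))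
              / (Real.sqrt μ * ((k : ℝ) + 1))) - 1| ^ 2
        * (c (k + 1)) ^ 2)
      ≤ μ * ∑' k : ℕ, ((k : ℝ) + 1) ^ 4 * (c (k + 1)) ^ 2 := by
  have h_term : ∀ k : ℕ, ((k : ℝ) + 1) ^ 2
      * |√(tanh (√μ * ((k : ℝ) + 1)) / (√μ * ((k : ℝ) + 1))) - 1| ^ 2 * (c (k + 1)) ^ 2
      ≤ μ * (((k : ℝ) + 1) ^ 4 * (c (k + 1)) ^ 2) := fun k => by
    have h := sq_abs_sqrt_tanh_div_sub_one_le hμ0 (Nat.cast_add_one_pos k)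
    calc _ ≤ ((k : ℝ) + 1) ^ 2 * (μ * ((k : ℝ) + 1) ^ 2) * (c (k + 1)) ^ 2 := by gcongr
      _ = _ := by ring
  have h_rhs := hH1.mul_left μ
  rw [← tsum_mul_left]
  exact (h_rhs.of_nonneg_of_le (fun k => by positivity) h_term).tsum_le_tsum h_term h_rhs

/-- In Fourier coefficients c k = ⟨ζ₀, φ_k⟩: for μ ∈ (0,1), if
∑_{k≥1} k⁴|c_k|² < ∞ (ζ₀ ∈ H¹), then
∑_{k≥1} k²·|√(tanh(√μ k)/(√μ k)) - 1|²·|c_k|² ≤ μ·∑_{k≥1} k⁴|c_k|²,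
i.e. ‖((1/μ)A_μ)^{1/2}ζ₀ - A₀^{1/2}ζ₀‖²_{L²} ≤ μ‖ζ₀‖²_{H¹}. -/
theorem sqrt_op_convergence (μ : ℝ) (hμ0 : 0 < μ) (hμ1 : μ < 1)
    (c : ℕ → ℝ)
    (hH1 : Summable fun k : ℕ => ((k : ℝ) + 1) ^ 4 * (c (k + 1)) ^ 2) :
    (∑' k : ℕ, ((k : ℝ) + 1) ^ 2
        * |Real.sqrt (Real.tanh (Real.sqrt μ * ((k : ℝ) + 1))
              / (Real.sqrt μ * ((k : ℝ) + 1))) - 1| ^ 2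
        * (c (k + 1)) ^ 2)
      ≤ μ * ∑' k : ℕ, ((k : ℝ) + 1) ^ 4 * (c (k + 1)) ^ 2 :=
  sqrt_op_convergence_general μ hμ0 c hH1
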